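/- Let V be a complex inner product space and let P ∈ End(V) model a 'projection state' with the following recursive structure: define a sequence of nonnegative reals N_n by N_1 = τ where τ ≥ 0, and N_n = n(τ − (n−1)) N_{n−1} for n ≥ 2. Suppose N_n ≥ 0 for all n ≥ 1 and that τ is finite. Then τ ∈ ℕ, i.e., τ is a nonnegative integer. -/
import Mathlib


/-- If the recursively defined norms `N_n` with `N_1 = τ` and
`N_n = n (τ - (n-1)) N_{n-1}` are all nonnegative, then `τ` is a nonnegative integer. -/
theorem quantization_recursion (τ : ℝ) (hτ : 0 ≤ τ) (N : ℕ → ℝ)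
    (hN1 : N 1 = τ)
    (hrec : ∀ n : ℕ, 2 ≤ n → N n = (n : ℝ) * (τ - ((n : ℝ) - 1)) * N (n - 1))
    (hpos : ∀ n : ℕ, 1 ≤ n → 0 ≤ N n) :
    ∃ m : ℕ, τ = (m : ℝ) := by
  by_contra h
  push_neg at h
  set m : ℕ := ⌊τ⌋₊ with hm
  have hlt : (m : ℝ) < τ := by
    rcases lt_or_eq_of_le (Nat.floor_le hτ) with h1 | h1
    · exact h1
    · exact absurd h1.symm (h m)
  have hlt2 : τ < (m : ℝ) + 1 := Nat.lt_floor_add_one τ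
  -- positivity up to m+1
  have key : ∀ n : ℕ, 1 ≤ n → n ≤ m + 1 → 0 < N n := by
    intro n
    induction n with
    | zero => intro h1; omega
    | succ k ih =>
      intro _ hle
      rcases Nat.eq_zero_or_pos k with hk | hk
      · subst hk
        simpa [hN1] using lt_of_le_of_lt (Nat.cast_nonneg m) hlt
      · have h2 : 2 ≤ k + 1 := by omega
        rw [hrec (k + 1) h2]
        simp only [Nat.add_sub_cancel]
        have hNk : 0 < N k := ih hk (by omega)
        have hf : 0 < τ - (((k : ℕ) + 1 : ℝ) - 1) := by
          have : (k : ℝ) ≤ (m : ℝ) := by exact_mod_cast Nat.le_of_lt_succ (by omega)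
          push_cast
          linarith
        have hn : (0 : ℝ) < ((k : ℕ) + 1 : ℝ) := by positivity
        push_cast at hf hn ⊢
        positivity
  have hmain : N (m + 2) < 0 := by
    rw [hrec (m + 2) (by omega), show m + 2 - 1 = m + 1 from rfl]
    have h1 : 0 < N (m + 1) := key (m + 1) (by omega) le_rfl
    have h2 : τ - (((m : ℕ) + 2 : ℝ) - 1) < 0 := by push_cast; linarith
    have h3 : (0 : ℝ) < ((m : ℕ) + 2 : ℝ) := by positivity
    push_cast at h2 h3 ⊢
    exact mul_neg_of_neg_of_pos (mul_neg_of_pos_of_neg h3 h2) h1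
  exact absurd (hpos (m + 2) (by omega)) (not_le.mpr hmain)
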